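/- arXiv:1805.09426 — 2 statements merged into one kernel-verified Lean document; each statement's English description precedes it below -/
import Mathlib

section
/- Fix α ∈ (0,1), an integer m ≥ 2 and an integer l ≠ 0. Define the kernel Q_l(s,τ) on (0,∞)² by Q_l(s,τ) = (i/2) sign(l) s^{|ml|-1} τ^{-|ml|} G'(s) for τ ≥ s and Q_l(s,τ) = (i/2) sign(l) s^{-|ml|-1} τ^{|ml|} G'(s) for τ ≤ s, where G' satisfies |G'(s)| ≤ C(1+s)^{-1-α}·s^{-1}·s = C(1+s)^{-1-α}. Then the Hilbert–Schmidt norm squared ∫₀^∞∫₀^∞ |Q_l(s,τ)|² s ds τ dτ is finite and bounded by C/|ml| for a constant C depending only on α and the bound on G'. -/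
/-!
Write `n = |ml| ≥ 2`. Up to the factor `|G'(s)|² / 4`, the weighted square `|Q_l(s,τ)|² s τ` is
`(s/τ)^(2n-1)` for `τ ≥ s` and `(τ/s)^(2n+1)` for `τ ≤ s`, whose `τ`-integral is
`s/(2n-2) + s/(2n+2) ≤ 2s/n`. The decay of `G'` gives `|G'(s)|² s ≤ C² (1+s)^(-1-2α)`, which
integrates to `C²/(2α)`; altogether the double integral is at most `C²/(4αn)`.
-/

open MeasureTheory Set

lemma lintegral_Ioi_rpow_of_lt {s p : ℝ} (hs : 0 < s) (hp : p < -1) :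
    ∫⁻ τ in Ioi s, ENNReal.ofReal (τ ^ p) = ENNReal.ofReal (-s ^ (p + 1) / (p + 1)) := by
  rw [← integral_Ioi_rpow_of_lt hp hs]
  refine (ofReal_integral_eq_lintegral_ofReal (integrableOn_Ioi_rpow_of_lt hp hs) ?_).symm
  filter_upwards [ae_restrict_mem measurableSet_Ioi] with x hx
  exact Real.rpow_nonneg (hs.trans hx).le _

lemma lintegral_Ioc_rpow {s p : ℝ} (hs : 0 < s) (hp : 0 ≤ p) :
    ∫⁻ τ in Ioc 0 s, ENNReal.ofReal (τ ^ p) = ENNReal.ofReal (s ^ (p + 1) / (p + 1)) := by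
  have hint : IntegrableOn (fun τ : ℝ => τ ^ p) (Ioc 0 s) :=
    (intervalIntegral.intervalIntegrable_rpow (Or.inl hp)).1
  have hval : ∫ τ in Ioc 0 s, τ ^ p = s ^ (p + 1) / (p + 1) := by
    rw [← intervalIntegral.integral_of_le hs.le, integral_rpow (Or.inl (by linarith)),
      Real.zero_rpow (by positivity), sub_zero]
  rw [← hval, ofReal_integral_eq_lintegral_ofReal hint]
  filter_upwards [ae_restrict_mem measurableSet_Ioc] with x hx
  exact Real.rpow_nonneg hx.1.le _

lemma lintegral_Ioi_div_rpow {s p : ℝ} (hs : 0 < s) (hp : 1 < p) :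
    ∫⁻ τ in Ioi s, ENNReal.ofReal ((s / τ) ^ p) = ENNReal.ofReal (s / (p - 1)) := by
  have hsplit : ∀ τ ∈ Ioi s,
      ENNReal.ofReal ((s / τ) ^ p) = ENNReal.ofReal (s ^ p) * ENNReal.ofReal (τ ^ (-p)) := by
    intro τ hτ
    rw [← ENNReal.ofReal_mul (by positivity), Real.div_rpow hs.le (hs.trans hτ).le,
      Real.rpow_neg (hs.trans hτ).le, div_eq_mul_inv]
  rw [setLIntegral_congr_fun measurableSet_Ioi hsplit,
    lintegral_const_mul' _ _ ENNReal.ofReal_ne_top, lintegral_Ioi_rpow_of_lt hs (by linarith),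
    ← ENNReal.ofReal_mul (by positivity)]
  congr 1
  rw [mul_div_assoc', mul_neg, ← Real.rpow_add hs, ← neg_div_neg_eq, neg_neg]
  ring_nf
  rw [Real.rpow_one, mul_comm]

lemma lintegral_Ioc_div_rpow {s p : ℝ} (hs : 0 < s) (hp : 0 ≤ p) :
    ∫⁻ τ in Ioc 0 s, ENNReal.ofReal ((τ / s) ^ p) = ENNReal.ofReal (s / (p + 1)) := by
  have hsplit : ∀ τ ∈ Ioc 0 s,
      ENNReal.ofReal ((τ / s) ^ p) = ENNReal.ofReal ((s ^ p)⁻¹) * ENNReal.ofReal (τ ^ p) := by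
    intro τ hτ
    rw [← ENNReal.ofReal_mul (by positivity), Real.div_rpow hτ.1.le hs.le, div_eq_inv_mul]
  rw [setLIntegral_congr_fun measurableSet_Ioc hsplit,
    lintegral_const_mul' _ _ ENNReal.ofReal_ne_top, lintegral_Ioc_rpow hs hp,
    ← ENNReal.ofReal_mul (by positivity)]
  congr 1
  rw [Real.rpow_add_one hs.ne']
  field_simp

lemma lintegral_Ioi_one_add_rpow {p : ℝ} (hp : p < -1) :
    ∫⁻ s in Ioi 0, ENNReal.ofReal ((1 + s) ^ p) = ENNReal.ofReal (-1 / (p + 1)) := by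
  rw [(measurePreserving_add_left volume (1 : ℝ)).setLIntegral_comp_emb
      (measurableEmbedding_addLeft 1) (fun x => ENNReal.ofReal (x ^ p)), image_const_add_Ioi,
    add_zero, lintegral_Ioi_rpow_of_lt one_pos hp, Real.one_rpow]

lemma sq_mul_le_of_abs_le {α C g s : ℝ} (hs : 0 ≤ s) (hg : |g| ≤ C * (1 + s) ^ (-1 - α)) :
    g ^ 2 * s ≤ C ^ 2 * (1 + s) ^ (-1 - 2 * α) := by
  have h1s : 0 < 1 + s := by linarith
  have hg2 : g ^ 2 ≤ C ^ 2 * ((1 + s) ^ (-1 - α)) ^ 2 := by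
    rw [← sq_abs, ← mul_pow]
    exact pow_le_pow_left₀ (abs_nonneg g) hg 2
  have hpow : ((1 + s) ^ (-1 - α)) ^ 2 * (1 + s) = (1 + s) ^ (-1 - 2 * α) := by
    rw [← Real.rpow_natCast, ← Real.rpow_mul h1s.le, ← Real.rpow_add_one h1s.ne']
    norm_num
    ring_nf
  calc g ^ 2 * s ≤ C ^ 2 * ((1 + s) ^ (-1 - α)) ^ 2 * (1 + s) := by
        gcongr
        linarith
    _ = C ^ 2 * (1 + s) ^ (-1 - 2 * α) := by rw [mul_assoc, hpow]

lemma norm_I_div_two_mul_sign_mul {l : ℤ} (hl : l ≠ 0) (x : ℝ) :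
    ‖Complex.I / 2 * (l.sign : ℂ) * (x : ℂ)‖ = |x| / 2 := by
  rcases hl.lt_or_gt with h | h <;>
    simp [Int.sign_eq_neg_one_of_neg, Int.sign_eq_one_of_pos, h, div_eq_inv_mul]

lemma zpow_sq_mul_of_le {s τ : ℝ} (hs : 0 < s) (hτ : 0 < τ) (n : ℤ) :
    (s ^ (n - 1) * τ ^ (-n)) ^ 2 * s * τ = (s / τ) ^ (2 * n - 1) := by
  rw [two_mul, zpow_sub₀ (div_pos hs hτ).ne', zpow_add₀ (div_pos hs hτ).ne', zpow_sub₀ hs.ne',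
    zpow_neg, div_zpow]
  field_simp

lemma zpow_sq_mul_of_lt {s τ : ℝ} (hs : 0 < s) (hτ : 0 < τ) (n : ℤ) :
    (s ^ (-n - 1) * τ ^ n) ^ 2 * s * τ = (τ / s) ^ (2 * n + 1) := by
  rw [two_mul, zpow_add₀ (div_pos hτ hs).ne', zpow_add₀ (div_pos hτ hs).ne', zpow_sub₀ hs.ne',
    zpow_neg, div_zpow]
  field_simp

noncomputable def modeKernel (n : ℤ) (s τ : ℝ) : ℝ :=
  if s ≤ τ then (s / τ) ^ (2 * n - 1) else (τ / s) ^ (2 * n + 1)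

lemma norm_sq_mul_eq_modeKernel {l : ℤ} (hl : l ≠ 0) (n : ℤ) (g : ℝ) {s τ : ℝ}
    (hs : 0 < s) (hτ : 0 < τ) :
    ‖if s ≤ τ then Complex.I / 2 * (l.sign : ℂ) * ((s ^ (n - 1) * τ ^ (-n) * g : ℝ) : ℂ)
      else Complex.I / 2 * (l.sign : ℂ) * ((s ^ (-n - 1) * τ ^ n * g : ℝ) : ℂ)‖ ^ 2 * s * τ
      = g ^ 2 / 4 * modeKernel n s τ := by
  rw [modeKernel]
  split_ifs
  · rw [norm_I_div_two_mul_sign_mul hl, div_pow, sq_abs, ← zpow_sq_mul_of_le hs hτ]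
    ring
  · rw [norm_I_div_two_mul_sign_mul hl, div_pow, sq_abs, ← zpow_sq_mul_of_lt hs hτ]
    ring

lemma lintegral_modeKernel {n : ℤ} (hn : 1 < n) {s : ℝ} (hs : 0 < s) :
    ∫⁻ τ in Ioi 0, ENNReal.ofReal (modeKernel n s τ)
      = ENNReal.ofReal (s / (2 * n + 2)) + ENNReal.ofReal (s / (2 * n - 2)) := by
  have hn' : (1 : ℝ) < n := by exact_mod_cast hn
  have h_below : EqOn (fun τ => ENNReal.ofReal (modeKernel n s τ))
      (fun τ => ENNReal.ofReal ((τ / s) ^ ((2 * n + 1 : ℤ) : ℝ))) (Ioc 0 s) := by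
    intro τ ⟨hτ, hτs⟩
    simp only [modeKernel, Real.rpow_intCast]
    split_ifs with h
    · obtain rfl := le_antisymm hτs h
      simp [div_self hτ.ne']
    · rfl
  have h_above : EqOn (fun τ => ENNReal.ofReal (modeKernel n s τ))
      (fun τ => ENNReal.ofReal ((s / τ) ^ ((2 * n - 1 : ℤ) : ℝ))) (Ioi s) := by
    intro τ hτ
    simp only [modeKernel, Real.rpow_intCast, if_pos (le_of_lt (mem_Ioi.mp hτ))]
  rw [← Ioc_union_Ioi_eq_Ioi hs.le, lintegral_union measurableSet_Ioi Ioc_disjoint_Ioi_same,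
    setLIntegral_congr_fun measurableSet_Ioc h_below,
    setLIntegral_congr_fun measurableSet_Ioi h_above,
    lintegral_Ioc_div_rpow hs (by push_cast; linarith),
    lintegral_Ioi_div_rpow hs (by push_cast; linarith)]
  push_cast
  ring_nf

lemma lintegral_modeKernel_le {n : ℤ} (hn : 2 ≤ n) {s : ℝ} (hs : 0 < s) :
    ∫⁻ τ in Ioi 0, ENNReal.ofReal (modeKernel n s τ) ≤ ENNReal.ofReal (2 * s / n) := by
  have hn' : (2 : ℝ) ≤ n := by exact_mod_cast hn
  rw [lintegral_modeKernel hn hs, ← ENNReal.ofReal_add (by positivity) (by bound)]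
  refine ENNReal.ofReal_le_ofReal ?_
  have h₁ : s / (2 * n + 2) ≤ s / n :=
    div_le_div_of_nonneg_left hs.le (by positivity) (by linarith)
  have h₂ : s / (2 * n - 2) ≤ s / n :=
    div_le_div_of_nonneg_left hs.le (by positivity) (by linarith)
  linarith [mul_div_assoc 2 s (n : ℝ)]

lemma lintegral_lintegral_sq_mul_modeKernel_le {α C : ℝ} (hα : 0 < α) {g : ℝ → ℝ}
    (hg : ∀ s ≥ 0, |g s| ≤ C * (1 + s) ^ (-1 - α)) {n : ℤ} (hn : 2 ≤ n) :
    ∫⁻ s in Ioi 0, ∫⁻ τ in Ioi 0, ENNReal.ofReal (g s ^ 2 / 4 * modeKernel n s τ)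
      ≤ ENNReal.ofReal (C ^ 2 / (4 * α * n)) := by
  have hn' : (0 : ℝ) < n := by exact_mod_cast (by omega : 0 < n)
  have hinner : ∀ s ∈ Ioi (0 : ℝ),
      ∫⁻ τ in Ioi 0, ENNReal.ofReal (g s ^ 2 / 4 * modeKernel n s τ)
        ≤ ENNReal.ofReal (C ^ 2 / (2 * n) * (1 + s) ^ (-1 - 2 * α)) := by
    intro s hs
    calc ∫⁻ τ in Ioi 0, ENNReal.ofReal (g s ^ 2 / 4 * modeKernel n s τ)
        = ENNReal.ofReal (g s ^ 2 / 4) * ∫⁻ τ in Ioi 0, ENNReal.ofReal (modeKernel n s τ) := by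
          simp_rw [ENNReal.ofReal_mul (by positivity : 0 ≤ g s ^ 2 / 4)]
          exact lintegral_const_mul' _ _ ENNReal.ofReal_ne_top
      _ ≤ ENNReal.ofReal (g s ^ 2 / 4) * ENNReal.ofReal (2 * s / n) :=
          by gcongr; exact lintegral_modeKernel_le hn hs
      _ = ENNReal.ofReal (g s ^ 2 * s / (2 * n)) := by
          rw [← ENNReal.ofReal_mul (by positivity)]
          congr 1
          field_simp
          ring
      _ ≤ ENNReal.ofReal (C ^ 2 / (2 * n) * (1 + s) ^ (-1 - 2 * α)) := by
          refine ENNReal.ofReal_le_ofReal ?_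
          rw [div_mul_eq_mul_div]
          exact div_le_div_of_nonneg_right (sq_mul_le_of_abs_le (le_of_lt hs) (hg s (le_of_lt hs)))
            (by positivity)
  calc _ ≤ ∫⁻ s in Ioi 0, ENNReal.ofReal (C ^ 2 / (2 * n) * (1 + s) ^ (-1 - 2 * α)) :=
        setLIntegral_mono' measurableSet_Ioi hinner
    _ = ENNReal.ofReal (C ^ 2 / (2 * n)) * ENNReal.ofReal (-1 / (-1 - 2 * α + 1)) := by
        simp_rw [ENNReal.ofReal_mul (by positivity : 0 ≤ C ^ 2 / (2 * n))]
        rw [lintegral_const_mul' _ _ ENNReal.ofReal_ne_top,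
          lintegral_Ioi_one_add_rpow (by linarith)]
    _ = ENNReal.ofReal (C ^ 2 / (4 * α * n)) := by
        rw [← ENNReal.ofReal_mul (by positivity), show -1 - 2 * α + 1 = -(2 * α) by ring]
        congr 1
        field_simp
        ring

theorem stmt_4_general (α C : ℝ) (hα : α ∈ Ioo (0:ℝ) 1) :
    ∃ C' > (0:ℝ), ∀ (m l : ℤ), 2 ≤ m → l ≠ 0 →
      ∀ (G' : ℝ → ℝ) (Q : ℝ → ℝ → ℂ),
      (∀ s ≥ (0:ℝ), |G' s| ≤ C * (1 + s) ^ (-1 - α)) →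
      (∀ s τ : ℝ, Q s τ =
        if s ≤ τ then
          (Complex.I / 2) * (l.sign : ℂ) *
            ((s ^ (|m * l| - 1 : ℤ) * τ ^ (-|m * l| : ℤ) * G' s : ℝ) : ℂ)
        else
          (Complex.I / 2) * (l.sign : ℂ) *
            ((s ^ (-|m * l| - 1 : ℤ) * τ ^ (|m * l| : ℤ) * G' s : ℝ) : ℂ)) →
      ∫⁻ s in Ioi (0:ℝ), ∫⁻ τ in Ioi (0:ℝ),
          ENNReal.ofReal (‖Q s τ‖^2 * s * τ) ≤ ENNReal.ofReal (C' / |(m * l : ℤ)|) := by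
  have hα0 : 0 < α := hα.1
  refine ⟨(C ^ 2 + 1) / (4 * α), by positivity, ?_⟩
  intro m l hm hl G' Q hG hQ
  have hn : 2 ≤ |m * l| := by
    rw [abs_mul]
    nlinarith [le_abs_self m, Int.one_le_abs hl]
  calc _ = ∫⁻ s in Ioi 0, ∫⁻ τ in Ioi 0,
          ENNReal.ofReal (G' s ^ 2 / 4 * modeKernel |m * l| s τ) :=
        setLIntegral_congr_fun measurableSet_Ioi fun s hs =>
          setLIntegral_congr_fun measurableSet_Ioi fun τ hτ => by
            rw [hQ, norm_sq_mul_eq_modeKernel hl _ _ hs hτ]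
    _ ≤ ENNReal.ofReal (C ^ 2 / (4 * α * |m * l|)) :=
        lintegral_lintegral_sq_mul_modeKernel_le hα0 hG hn
    _ ≤ ENNReal.ofReal ((C ^ 2 + 1) / (4 * α) / |(m * l : ℤ)|) := by
        refine ENNReal.ofReal_le_ofReal ?_
        have hn' : (0 : ℝ) < |(m * l : ℤ)| := by exact_mod_cast (by omega : 0 < |m * l|)
        rw [div_div, Int.cast_abs]
        gcongr
        linarith

/-- Hilbert–Schmidt bound for the angular-mode `ml` kernel. -/
theorem stmt_4 (α C : ℝ) (hα : α ∈ Ioo (0:ℝ) 1) (hC : 0 ≤ C) :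
    ∃ C' > (0:ℝ), ∀ (m l : ℤ), 2 ≤ m → l ≠ 0 →
      ∀ (G' : ℝ → ℝ) (Q : ℝ → ℝ → ℂ),
      (∀ s ≥ (0:ℝ), |G' s| ≤ C * (1 + s) ^ (-1 - α)) →
      (∀ s τ : ℝ, Q s τ =
        if s ≤ τ then
          (Complex.I / 2) * (l.sign : ℂ) *
            ((s ^ (|m * l| - 1 : ℤ) * τ ^ (-|m * l| : ℤ) * G' s : ℝ) : ℂ)
        else
          (Complex.I / 2) * (l.sign : ℂ) *
            ((s ^ (-|m * l| - 1 : ℤ) * τ ^ (|m * l| : ℤ) * G' s : ℝ) : ℂ)) →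
      ∫⁻ s in Ioi (0:ℝ), ∫⁻ τ in Ioi (0:ℝ),
          ENNReal.ofReal (‖Q s τ‖^2 * s * τ) ≤ ENNReal.ofReal (C' / |(m * l : ℤ)|) :=
  stmt_4_general α C hα
end

section
/- Let γ > 0, α > 0 and suppose |Ω'(s)| s ≤ C s² (1+s)^{-2-α} for all s ≥ 0. Let x : [0,∞) → ℝ² satisfy |y| e^{-γξ - 1} ≤ |x(ξ)| ≤ |y| e^{-γξ + 1} for all ξ ≥ 0. Then ∫₀^∞ |x(ξ)|² (1 + |x(ξ)|)^{-2-α} dξ ≤ (C'/γ) ∫₀^∞ r(1+r)^{-2-α} dr < ∞, with C' independent of y. -/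
/-!
Along the trajectory `‖x ξ‖` is comparable to `a e^{-γξ}` with `a = ‖y‖`. The integrand
`s² (1 + s)^{-2-α}` is at most `s^{-α}` for large `s` and at most `s²` for small `s`. Splitting
the time axis at `t = max 0 (log a / γ)`, where `a e^{-γt}` drops to `1`, the integrand is
bounded by `e^{α} e^{αγ(ξ - t)}` before `t` and by `e^{2} e^{-2γ(ξ - t)}` after it. Both
exponentials have integral of order `1 / γ`, whatever the value of `a`.
-/

open MeasureTheory Set

local notation "E2" => EuclideanSpace ℝ (Fin 2)

open Real

lemma integrableOn_Ioi_mul_one_add_rpow {α : ℝ} (hα : 0 < α) :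
    IntegrableOn (fun r => r * (1 + r) ^ (-2 - α)) (Ioi (0 : ℝ)) := by
  refine (integrableOn_add_rpow_Ioi_of_lt (a := -1 - α) (m := 1) (by linarith)
    (by norm_num)).mono' (by fun_prop) ?_
  filter_upwards [ae_restrict_mem measurableSet_Ioi] with r (hr : 0 < r)
  have h1r : 0 < r + 1 := by linarith
  rw [norm_of_nonneg (by positivity), add_comm 1 r,
    show -1 - α = 1 + (-2 - α) by ring, rpow_add h1r, rpow_one]
  gcongr
  linarith

lemma integral_Ioi_mul_one_add_rpow_pos {α : ℝ} (hα : 0 < α) :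
    0 < ∫ r in Ioi (0 : ℝ), r * (1 + r) ^ (-2 - α) := by
  have hpos : ∀ r ∈ Ioi (0 : ℝ), 0 < r * (1 + r) ^ (-2 - α) := fun r (hr : 0 < r) => by
    positivity
  rw [setIntegral_pos_iff_support_of_nonneg_ae
    ((ae_restrict_iff' measurableSet_Ioi).2 (ae_of_all _ fun r hr => (hpos r hr).le))
    (integrableOn_Ioi_mul_one_add_rpow hα)]
  calc (0 : ENNReal) < volume (Ioi (0 : ℝ)) := by simp
    _ ≤ _ := measure_mono fun r hr => show r ∈ _ ∩ _ from ⟨(hpos r hr).ne', hr⟩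

lemma lintegral_Ioi_ofReal_exp_mul_add {a : ℝ} (ha : a < 0) (b c : ℝ) :
    ∫⁻ x in Ioi c, ENNReal.ofReal (exp (a * x + b)) = ENNReal.ofReal (exp (a * c + b) / -a) := by
  simp_rw [exp_add]
  rw [← ofReal_integral_eq_lintegral_ofReal ((integrableOn_exp_mul_Ioi ha c).mul_const _)
    (ae_of_all _ fun _ => by positivity), integral_mul_const, integral_exp_mul_Ioi ha]
  ring_nf

lemma lintegral_Iic_ofReal_exp_mul_add {a : ℝ} (ha : 0 < a) (b c : ℝ) :
    ∫⁻ x in Iic c, ENNReal.ofReal (exp (a * x + b)) = ENNReal.ofReal (exp (a * c + b) / a) := by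
  simp_rw [exp_add]
  rw [← ofReal_integral_eq_lintegral_ofReal ((integrableOn_exp_mul_Iic ha c).mul_const _)
    (ae_of_all _ fun _ => by positivity), integral_mul_const, integral_exp_mul_Iic ha]
  ring_nf

lemma sq_mul_one_add_rpow_le_sq {p s : ℝ} (hp : p ≤ 0) (hs : 0 ≤ s) :
    s ^ 2 * (1 + s) ^ p ≤ s ^ 2 :=
  mul_le_of_le_one_right (by positivity) (rpow_le_one_of_one_le_of_nonpos (by linarith) hp)

lemma sq_mul_one_add_rpow_le_rpow {p s : ℝ} (hp : p ≤ 0) (hs : 0 < s) :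
    s ^ 2 * (1 + s) ^ p ≤ s ^ (2 + p) := by
  rw [rpow_add hs, rpow_two]
  exact mul_le_mul_of_nonneg_left (rpow_le_rpow_of_nonpos hs (by linarith) hp) (by positivity)

lemma sq_mul_one_add_rpow_le_exp_of_le_mul_exp {γ a p t ξ s : ℝ} (hp : p ≤ 0)
    (ha : log a ≤ γ * t) (hs₀ : 0 ≤ s) (hs : s ≤ a * exp (-γ * ξ + 1)) :
    s ^ 2 * (1 + s) ^ p ≤ exp (-2 * γ * ξ + (2 + 2 * γ * t)) := by
  have hs' : s ≤ exp (-γ * ξ + 1 + γ * t) := by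
    rw [exp_add _ (γ * t), mul_comm]
    exact hs.trans (mul_le_mul_of_nonneg_right
      ((le_exp_log a).trans (exp_le_exp.2 ha)) (exp_pos _).le)
  calc s ^ 2 * (1 + s) ^ p ≤ s ^ 2 := sq_mul_one_add_rpow_le_sq hp hs₀
    _ ≤ exp (-γ * ξ + 1 + γ * t) ^ 2 := by gcongr
    _ = exp (-2 * γ * ξ + (2 + 2 * γ * t)) := by rw [← exp_nat_mul]; ring_nf

lemma sq_mul_one_add_rpow_le_exp_of_mul_exp_le {γ a α t ξ s : ℝ} (hα : 0 ≤ α)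
    (ha : exp (γ * t) = a) (hs : a * exp (-γ * ξ - 1) ≤ s) :
    s ^ 2 * (1 + s) ^ (-2 - α) ≤ exp (α * γ * ξ + (α - α * γ * t)) := by
  rw [← ha, ← exp_add] at hs
  have hs₀ : 0 < s := (exp_pos _).trans_le hs
  calc s ^ 2 * (1 + s) ^ (-2 - α) ≤ s ^ (2 + (-2 - α)) :=
        sq_mul_one_add_rpow_le_rpow (by linarith) hs₀
    _ ≤ exp (γ * t + (-γ * ξ - 1)) ^ (-α) := by
        rw [show 2 + (-2 - α) = -α by ring]
        exact rpow_le_rpow_of_nonpos (exp_pos _) hs (by linarith)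
    _ = exp (α * γ * ξ + (α - α * γ * t)) := by rw [← exp_mul]; ring_nf

lemma lintegral_Ioi_sq_mul_one_add_rpow_le {γ α a : ℝ} (hγ : 0 < γ) (hα : 0 < α) (ha : 0 ≤ a)
    {s : ℝ → ℝ} (hs : ∀ ξ ≥ (0 : ℝ), a * exp (-γ * ξ - 1) ≤ s ξ ∧ s ξ ≤ a * exp (-γ * ξ + 1)) :
    ∫⁻ ξ in Ioi 0, ENNReal.ofReal (s ξ ^ 2 * (1 + s ξ) ^ (-2 - α)) ≤
      ENNReal.ofReal ((exp α / α + exp 2 / 2) / γ) := by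
  set t := max 0 (log a / γ)
  have ht : log a ≤ γ * t := (div_le_iff₀' hγ).1 (le_max_right _ _)
  have head : ∫⁻ ξ in Ioc 0 t, ENNReal.ofReal (s ξ ^ 2 * (1 + s ξ) ^ (-2 - α)) ≤
      ENNReal.ofReal (exp α / (α * γ)) := by
    calc _ ≤ ∫⁻ ξ in Iic t, ENNReal.ofReal (exp (α * γ * ξ + (α - α * γ * t))) := by
          refine (setLIntegral_mono' measurableSet_Ioc fun ξ hξ => ?_).trans
            (lintegral_mono_set Ioc_subset_Iic_self)
          have hlog : 0 < log a / γ := by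
            simpa [t] using hξ.1.trans_le hξ.2
          have hat : exp (γ * t) = a := by
            rw [show t = log a / γ from max_eq_right hlog.le, mul_div_cancel₀ _ hγ.ne',
              exp_log (one_pos.trans ((log_pos_iff ha).1 ((div_pos_iff_of_pos_right hγ).1 hlog)))]
          exact ENNReal.ofReal_le_ofReal
            (sq_mul_one_add_rpow_le_exp_of_mul_exp_le hα.le hat (hs ξ hξ.1.le).1)
      _ = _ := by rw [lintegral_Iic_ofReal_exp_mul_add (by positivity)]; ring_nf
  have tail : ∫⁻ ξ in Ioi t, ENNReal.ofReal (s ξ ^ 2 * (1 + s ξ) ^ (-2 - α)) ≤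
      ENNReal.ofReal (exp 2 / (2 * γ)) := by
    calc _ ≤ ∫⁻ ξ in Ioi t, ENNReal.ofReal (exp (-2 * γ * ξ + (2 + 2 * γ * t))) := by
          refine setLIntegral_mono' measurableSet_Ioi fun ξ (hξ : t < ξ) => ?_
          have hξ₀ : 0 ≤ ξ := (le_max_left _ _).trans hξ.le
          have hs₀ : 0 ≤ s ξ := (mul_nonneg ha (exp_pos _).le).trans (hs ξ hξ₀).1
          exact ENNReal.ofReal_le_ofReal (sq_mul_one_add_rpow_le_exp_of_le_mul_exp
            (by linarith) ht hs₀ (hs ξ hξ₀).2)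
      _ = _ := by rw [lintegral_Ioi_ofReal_exp_mul_add (by linarith)]; ring_nf
  rw [← Ioc_union_Ioi_eq_Ioi (le_max_left 0 _), lintegral_union measurableSet_Ioi
    Ioc_disjoint_Ioi_same]
  calc _ ≤ ENNReal.ofReal (exp α / (α * γ)) + ENNReal.ofReal (exp 2 / (2 * γ)) :=
        add_le_add head tail
    _ = _ := by rw [← ENNReal.ofReal_add (by positivity) (by positivity)]; field_simp

theorem stmt_11_general (γ α : ℝ) (hγ : 0 < γ) (hα : 0 < α) :
    ∃ C' > (0:ℝ), ∀ (y : E2) (x : ℝ → E2), Continuous x →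
      (∀ ξ ≥ (0:ℝ), ‖y‖ * Real.exp (-γ * ξ - 1) ≤ ‖x ξ‖ ∧
                     ‖x ξ‖ ≤ ‖y‖ * Real.exp (-γ * ξ + 1)) →
      (∫⁻ ξ in Ioi (0:ℝ), ENNReal.ofReal (‖x ξ‖^2 * (1 + ‖x ξ‖) ^ (-2 - α)) ≤
        ENNReal.ofReal ((C' / γ) * ∫ r in Ioi (0:ℝ), r * (1 + r) ^ (-2 - α))) ∧
      IntegrableOn (fun r => r * (1 + r) ^ (-2 - α)) (Ioi (0:ℝ)) := by
  have hI := integral_Ioi_mul_one_add_rpow_pos hα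
  refine ⟨(exp α / α + exp 2 / 2) / ∫ r in Ioi (0:ℝ), r * (1 + r) ^ (-2 - α), by positivity,
    fun y x _ hx => ⟨?_, integrableOn_Ioi_mul_one_add_rpow hα⟩⟩
  convert lintegral_Ioi_sq_mul_one_add_rpow_le hγ hα (norm_nonneg y) hx using 2
  field_simp

/-- uniform integrability of the strain along exponentially contracting
trajectories. -/
theorem stmt_11 (γ α C : ℝ) (hγ : 0 < γ) (hα : 0 < α) (hC : 0 < C)
    (Ω' : ℝ → ℝ) (hΩ' : ∀ s ≥ (0:ℝ), |Ω' s| * s ≤ C * s^2 * (1 + s) ^ (-2 - α)) :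
    ∃ C' > (0:ℝ), ∀ (y : E2) (x : ℝ → E2), Continuous x →
      (∀ ξ ≥ (0:ℝ), ‖y‖ * Real.exp (-γ * ξ - 1) ≤ ‖x ξ‖ ∧
                     ‖x ξ‖ ≤ ‖y‖ * Real.exp (-γ * ξ + 1)) →
      (∫⁻ ξ in Ioi (0:ℝ), ENNReal.ofReal (‖x ξ‖^2 * (1 + ‖x ξ‖) ^ (-2 - α)) ≤
        ENNReal.ofReal ((C' / γ) * ∫ r in Ioi (0:ℝ), r * (1 + r) ^ (-2 - α))) ∧
      IntegrableOn (fun r => r * (1 + r) ^ (-2 - α)) (Ioi (0:ℝ)) :=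
  stmt_11_general γ α hγ hα
end
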